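/- arXiv:2402.05514 — 5 statements merged into one kernel-verified Lean document; each statement's English description precedes it below -/
import Mathlib

section
/- Let μ be a finite nonnegative Borel measure on (0,1), let R > 0, and suppose s ↦ c_{N,s} is a bounded positive measurable function on (0,1). Then lim_{r → +∞} ( ∫_{(0,1)} c_{N,s}/(r+R)^{N+2s} dμ(s) ) / ( ∫_{(0,1)} c_{N,s}/(r−R)^{N+2s} dμ(s) ) = 1. -/
/-! For `r > R` the bases satisfy `r - R ≤ r + R`, so each integrand `c s / (r + R) ^ e(s)` lies
between `((r - R) / (r + R)) ^ p` times `c s / (r - R) ^ e(s)` and `c s / (r - R) ^ e(s)`, where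
`p = N + 2` bounds the exponents `e(s) = N + 2s`. Integrating, the ratio is squeezed between
`((r - R) / (r + R)) ^ p` and `1`, and the lower bound tends to `1`. -/

open MeasureTheory Set Filter Topology

theorem tendsto_sub_div_add_atTop (R : ℝ) :
    Tendsto (fun r : ℝ => (r - R) / (r + R)) atTop (𝓝 1) := by
  have h : Tendsto (fun r : ℝ => 1 - 2 * R / (r + R)) atTop (𝓝 (1 - 0)) :=
    tendsto_const_nhds.sub
      (tendsto_const_nhds.div_atTop (tendsto_atTop_add_const_right _ R tendsto_id))
  rw [sub_zero] at h
  refine h.congr' ?_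
  filter_upwards [eventually_gt_atTop (-R)] with r hr
  have hr' : r + R ≠ 0 := by linarith
  field_simp
  ring

theorem rpow_div_mul_div_rpow_le {a b x e p : ℝ} (ha : 0 < a) (hab : a ≤ b) (hx : 0 ≤ x)
    (hep : e ≤ p) : (a / b) ^ p * (x / a ^ e) ≤ x / b ^ e := by
  have hb : 0 < b := ha.trans_le hab
  calc (a / b) ^ p * (x / a ^ e)
      ≤ (a / b) ^ e * (x / a ^ e) :=
        mul_le_mul_of_nonneg_right
          (Real.rpow_le_rpow_of_exponent_ge (div_pos ha hb) ((div_le_one hb).2 hab) hep)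
          (div_nonneg hx (Real.rpow_pos_of_pos ha e).le)
    _ = x / b ^ e := by
        have ha' := (Real.rpow_pos_of_pos ha e).ne'
        have hb' := (Real.rpow_pos_of_pos hb e).ne'
        rw [Real.div_rpow ha.le hb.le]
        field_simp

theorem integral_pos_of_ae_pos {α : Type*} [MeasurableSpace α] {ν : Measure α} {f : α → ℝ}
    (hν : ν ≠ 0) (hf : ∀ᵐ x ∂ν, 0 < f x) (hfi : Integrable f ν) : 0 < ∫ x, f x ∂ν := by
  rw [integral_pos_iff_support_of_nonneg_ae (hf.mono fun _ hx => hx.le) hfi, pos_iff_ne_zero]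
  intro h0
  have hfalse : ∀ᵐ _ ∂ν, False := by
    filter_upwards [hf, measure_eq_zero_iff_ae_notMem.mp h0] with x hpos hx
    exact hx hpos.ne'
  exact hν (ae_eq_bot.mp (eventually_false_iff_eq_bot.mp hfalse))

section DivRpow

variable {α : Type*} [MeasurableSpace α] {ν : Measure α} {c e : α → ℝ}

theorem integrable_div_rpow [IsFiniteMeasure ν] (hc : Measurable c) (he : Measurable e)
    {M : ℝ} (hc0 : ∀ᵐ s ∂ν, 0 ≤ c s) (hcM : ∀ᵐ s ∂ν, c s ≤ M) (he0 : ∀ᵐ s ∂ν, 0 ≤ e s)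
    {a : ℝ} (ha : 1 ≤ a) : Integrable (fun s => c s / a ^ e s) ν := by
  refine (integrable_const M).mono'
    (hc.div (measurable_const.pow he)).aestronglyMeasurable ?_
  filter_upwards [hc0, hcM, he0] with s hc0 hcM he0
  have h1 := Real.one_le_rpow ha he0
  rw [Real.norm_of_nonneg (div_nonneg hc0 (zero_le_one.trans h1))]
  exact (div_le_self hc0 h1).trans hcM

theorem integral_div_rpow_div_mem_Icc [IsFiniteMeasure ν] (hν : ν ≠ 0) (hc : Measurable c)
    (he : Measurable e) {M p : ℝ} (hcpos : ∀ᵐ s ∂ν, 0 < c s) (hcM : ∀ᵐ s ∂ν, c s ≤ M)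
    (he0 : ∀ᵐ s ∂ν, 0 ≤ e s) (hep : ∀ᵐ s ∂ν, e s ≤ p) {a b : ℝ} (ha : 1 ≤ a) (hab : a ≤ b) :
    (∫ s, c s / b ^ e s ∂ν) / (∫ s, c s / a ^ e s ∂ν) ∈ Icc ((a / b) ^ p) 1 := by
  have ha0 : 0 < a := zero_lt_one.trans_le ha
  have hc0 : ∀ᵐ s ∂ν, 0 ≤ c s := hcpos.mono fun _ hs => hs.le
  have hia := integrable_div_rpow hc he hc0 hcM he0 ha
  have hib := integrable_div_rpow hc he hc0 hcM he0 (ha.trans hab)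
  have hpos : 0 < ∫ s, c s / a ^ e s ∂ν := by
    refine integral_pos_of_ae_pos hν ?_ hia
    filter_upwards [hcpos] with s hs
    exact div_pos hs (Real.rpow_pos_of_pos ha0 _)
  rw [mem_Icc, le_div_iff₀ hpos, div_le_one hpos, ← integral_const_mul]
  constructor
  · refine integral_mono_ae (hia.const_mul _) hib ?_
    filter_upwards [hc0, hep] with s hs hsp
    exact rpow_div_mul_div_rpow_le ha0 hab hs hsp
  · refine integral_mono_ae hib hia ?_
    filter_upwards [hcpos, he0] with s hs hs0
    exact div_le_div_of_nonneg_left hs.le (Real.rpow_pos_of_pos ha0 _)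
      (Real.rpow_le_rpow ha0.le hab hs0)

theorem tendsto_integral_div_rpow_div [IsFiniteMeasure ν] (hν : ν ≠ 0) (hc : Measurable c)
    (he : Measurable e) {M p : ℝ} (hcpos : ∀ᵐ s ∂ν, 0 < c s) (hcM : ∀ᵐ s ∂ν, c s ≤ M)
    (he0 : ∀ᵐ s ∂ν, 0 ≤ e s) (hep : ∀ᵐ s ∂ν, e s ≤ p) {R : ℝ} (hR : 0 ≤ R) :
    Tendsto (fun r : ℝ =>
      (∫ s, c s / (r + R) ^ e s ∂ν) / (∫ s, c s / (r - R) ^ e s ∂ν)) atTop (𝓝 1) := by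
  have hbounds : ∀ᶠ r : ℝ in atTop,
      (∫ s, c s / (r + R) ^ e s ∂ν) / (∫ s, c s / (r - R) ^ e s ∂ν) ∈
        Icc (((r - R) / (r + R)) ^ p) 1 := by
    filter_upwards [eventually_ge_atTop (R + 1)] with r hr
    exact integral_div_rpow_div_mem_Icc hν hc he hcpos hcM he0 hep (by linarith) (by linarith)
  have hlower : Tendsto (fun r : ℝ => ((r - R) / (r + R)) ^ p) atTop (𝓝 1) := by
    simpa using (tendsto_sub_div_add_atTop R).rpow_const (Or.inl one_ne_zero)
  exact tendsto_of_tendsto_of_tendsto_of_le_of_le' hlower tendsto_const_nhds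
    (hbounds.mono fun _ h => h.1) (hbounds.mono fun _ h => h.2)

end DivRpow

/-- Asymptotic ratio lemma: for a finite nontrivial measure `μ` on `(0,1)`, `R > 0`
and `c` bounded, positive and measurable on `(0,1)`,
`(∫ c_s/(r+R)^{N+2s} dμ)/(∫ c_s/(r-R)^{N+2s} dμ) → 1` as `r → ∞`. -/
theorem statement7 (N : ℕ) (μ : Measure ℝ) [IsFiniteMeasure μ]
    (hμ : μ (Set.Ioo (0 : ℝ) 1) ≠ 0)
    (R : ℝ) (hR : 0 < R)
    (c : ℝ → ℝ) (hcm : Measurable c)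
    (hcpos : ∀ s ∈ Set.Ioo (0 : ℝ) 1, 0 < c s)
    (M : ℝ) (hM : ∀ s ∈ Set.Ioo (0 : ℝ) 1, c s ≤ M) :
    Filter.Tendsto (fun r : ℝ =>
        (∫ s in Set.Ioo (0 : ℝ) 1, c s / (r + R) ^ ((N : ℝ) + 2 * s) ∂μ) /
        (∫ s in Set.Ioo (0 : ℝ) 1, c s / (r - R) ^ ((N : ℝ) + 2 * s) ∂μ))
      Filter.atTop (nhds 1) := by
  have hν : μ.restrict (Ioo (0 : ℝ) 1) ≠ 0 := by
    rwa [Ne, Measure.restrict_eq_zero]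
  have hIoo {P : ℝ → Prop} (h : ∀ s ∈ Ioo (0 : ℝ) 1, P s) :
      ∀ᵐ s ∂μ.restrict (Ioo (0 : ℝ) 1), P s :=
    ae_restrict_of_forall_mem measurableSet_Ioo h
  exact tendsto_integral_div_rpow_div (p := (N : ℝ) + 2) hν hcm (by fun_prop) (hIoo hcpos)
    (hIoo hM) (hIoo fun s hs => by linarith [hs.1]) (hIoo fun s hs => by linarith [hs.2]) hR.le
end

section
/- (Asymptotics at infinity of bounded Neumann-harmonic functions.) Let Ω ⊆ ℝᴺ be a bounded open set with |Ω| > 0, μ a finite nonnegative nontrivial Borel measure on (0,1), and u : ℝᴺ → ℝ bounded and measurable with u ∈ L¹(Ω) satisfying ∫_{(0,1)} 𝒩ₛu(x) dμ(s) = 0 for all x ∈ ℝᴺ∖Ω̄. Then lim_{|x|→+∞} u(x) = (1/|Ω|) ∫_Ω u(y) dy. -/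
/-!
Fix `x` with `‖x‖ ≥ R + 1`, where `Ω ⊆ B_R`. For each `s`, the kernel `k(y) = ‖x - y‖^{-(N+2s)}`
varies on `Ω` at most by the factor `((‖x‖ + R) / (‖x‖ - R))^{N+2} = 1 + δ`. Subtracting its lower
bound `m` from `k` does not change its integral against the mean-zero function `u - ⨍ u`, so this
integral is at most `δ · sup |u - ⨍ u| · ∫ k`. Hence `∫_Ω (u(x) - u(y)) k(y) dy` has the strict sign
of `u(x) - ⨍ u` whenever `|u(x) - ⨍ u| > δ · sup |u - ⨍ u|`; integrating in `s` against `c dμ`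
would then contradict the Neumann condition. So `|u(x) - ⨍ u| ≤ δ · sup |u - ⨍ u|`, and
`δ → 0` as `‖x‖ → ∞`.
-/

open MeasureTheory Set Filter Topology


section Kernel

variable {α : Type*} [MeasurableSpace α] {ν : Measure α} {f g k : α → ℝ} {C m δ : ℝ}

lemma integral_pos_of_ae_pos_s8 (hν : ν ≠ 0) (hg : Integrable g ν) (hpos : ∀ᵐ x ∂ν, 0 < g x) :
    0 < ∫ x, g x ∂ν := by
  refine (integral_pos_iff_support_of_nonneg_ae (hpos.mono fun _ h => h.le) hg).2 ?_
  have hsupp : Function.support g =ᵐ[ν] (univ : Set α) :=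
    ae_eq_univ.2 (ae_iff.1 (hpos.mono fun _ h => h.ne'))
  rw [measure_congr hsupp]
  exact Measure.measure_univ_pos.2 hν

variable [IsFiniteMeasure ν]

lemma abs_integral_sub_average_mul_le (hf : Integrable f ν)
    (hfC : ∀ᵐ y ∂ν, |f y - ⨍ z, f z ∂ν| ≤ C) (hk : Integrable k ν) (hk_lo : ∀ᵐ y ∂ν, m ≤ k y)
    (hk_hi : ∀ᵐ y ∂ν, k y ≤ (1 + δ) * m) (hm : 0 < m) :
    |∫ y, (f y - ⨍ z, f z ∂ν) * k y ∂ν| ≤ C * δ * ∫ y, k y ∂ν := by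
  set a := ⨍ z, f z ∂ν
  have hfa : Integrable (fun y => f y - a) ν := hf.sub (integrable_const a)
  have hfak : Integrable (fun y => (f y - a) * k y) ν :=
    hk.bdd_mul hfa.aestronglyMeasurable (by simpa only [Real.norm_eq_abs] using hfC)
  have hshift : ∫ y, (f y - a) * k y ∂ν = ∫ y, (f y - a) * (k y - m) ∂ν := by
    simp_rw [mul_sub]
    rw [integral_sub hfak (hfa.mul_const m), integral_mul_const, integral_sub_average ν f,
      zero_mul, sub_zero]
  rw [hshift, ← integral_const_mul, ← Real.norm_eq_abs]
  refine norm_integral_le_of_norm_le (hk.const_mul (C * δ)) ?_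
  filter_upwards [hfC, hk_lo, hk_hi] with y hC hlo hhi
  have hC0 : 0 ≤ C := (abs_nonneg _).trans hC
  have hδ : 0 ≤ δ := by nlinarith
  rw [Real.norm_eq_abs, abs_mul, abs_of_nonneg (sub_nonneg.2 hlo)]
  calc |f y - a| * (k y - m) ≤ C * (δ * m) := by gcongr; linarith
    _ ≤ C * δ * k y := by rw [← mul_assoc]; gcongr

lemma mul_integral_sub_mul_pos (hν : ν ≠ 0) (hf : Integrable f ν)
    (hfC : ∀ᵐ y ∂ν, |f y - ⨍ z, f z ∂ν| ≤ C) (hk : Integrable k ν) (hk_lo : ∀ᵐ y ∂ν, m ≤ k y)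
    (hk_hi : ∀ᵐ y ∂ν, k y ≤ (1 + δ) * m) (hm : 0 < m) {t : ℝ}
    (ht : C * δ < |t - ⨍ z, f z ∂ν|) :
    0 < (t - ⨍ z, f z ∂ν) * ∫ y, (t - f y) * k y ∂ν := by
  set a := ⨍ z, f z ∂ν
  have hP : 0 < ∫ y, k y ∂ν :=
    integral_pos_of_ae_pos_s8 hν hk (hk_lo.mono fun _ h => hm.trans_le h)
  have hE := abs_integral_sub_average_mul_le hf hfC hk hk_lo hk_hi hm
  have hsplit : ∫ y, (t - f y) * k y ∂ν
      = (t - a) * ∫ y, k y ∂ν - ∫ y, (f y - a) * k y ∂ν := by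
    have hfak : Integrable (fun y => (f y - a) * k y) ν :=
      hk.bdd_mul (hf.sub (integrable_const a)).aestronglyMeasurable
        (by simpa only [Real.norm_eq_abs] using hfC)
    rw [← integral_const_mul, ← integral_sub (hk.const_mul _) hfak]
    congr 1 with y
    ring
  rw [hsplit]
  set d := t - a
  set E := ∫ y, (f y - a) * k y ∂ν
  have hdE : d * E ≤ |d| * (C * δ * ∫ y, k y ∂ν) :=
    (le_abs_self _).trans (abs_mul d E ▸ mul_le_mul_of_nonneg_left hE (abs_nonneg d))
  have hCδ : 0 ≤ C * δ := nonneg_of_mul_nonneg_left ((abs_nonneg E).trans hE) hP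
  have hgap : 0 < |d| * (|d| - C * δ) * ∫ y, k y ∂ν :=
    mul_pos (mul_pos (hCδ.trans_lt ht) (sub_pos.2 ht)) hP
  nlinarith [abs_mul_abs_self d]

end Kernel

lemma inv_rpow_le_div_rpow_mul_inv_rpow {a b r e E : ℝ} (ha : 0 < a) (har : a ≤ r) (hrb : r ≤ b)
    (he : 0 ≤ e) (heE : e ≤ E) : (r ^ e)⁻¹ ≤ (b / a) ^ E * (b ^ e)⁻¹ := by
  have hb : 0 < b := ha.trans_le (har.trans hrb)
  calc (r ^ e)⁻¹ ≤ (a ^ e)⁻¹ := by gcongr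
    _ = (b / a) ^ e * (b ^ e)⁻¹ := by
      rw [Real.div_rpow hb.le ha.le]; field_simp
    _ ≤ (b / a) ^ E * (b ^ e)⁻¹ := by
      gcongr
      exact (one_le_div ha).2 (har.trans hrb)

lemma tendsto_add_div_sub_rpow_sub_one (R E : ℝ) :
    Tendsto (fun t : ℝ => ((t + R) / (t - R)) ^ E - 1) atTop (𝓝 0) := by
  have hinv := tendsto_inv_atTop_zero.const_mul R
  have hratio := (hinv.const_add 1).div (hinv.const_sub 1) (by simp : (1 : ℝ) - R * 0 ≠ 0)
  rw [mul_zero, add_zero, sub_zero, div_one] at hratio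
  have h := (hratio.rpow_const (p := E) (Or.inl one_ne_zero)).sub_const 1
  rw [Real.one_rpow, sub_self] at h
  refine h.congr' ?_
  filter_upwards [eventually_gt_atTop 0] with t ht
  simp only [Pi.div_apply]
  field_simp

lemma norm_sub_mem_Icc_of_mem_closedBall {E : Type*} [SeminormedAddCommGroup E] {R : ℝ}
    (x : E) {y : E} (hy : y ∈ Metric.closedBall 0 R) : ‖x - y‖ ∈ Icc (‖x‖ - R) (‖x‖ + R) := by
  rw [mem_closedBall_zero_iff] at hy
  exact ⟨by linarith [norm_sub_norm_le x y], by linarith [norm_sub_le x y]⟩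

/-- The paper's `𝒩ₛ u(x)` without the constant `c_{N,s}`, which is absorbed into the weight `c`. -/
noncomputable def nonlocalNeumann (N : ℕ) (Ω : Set (EuclideanSpace ℝ (Fin N)))
    (u : EuclideanSpace ℝ (Fin N) → ℝ) (s : ℝ) (x : EuclideanSpace ℝ (Fin N)) : ℝ :=
  ∫ y in Ω, (u x - u y) / ‖x - y‖ ^ ((N : ℝ) + 2 * s)

section nonlocalNeumann

variable {N : ℕ} {Ω : Set (EuclideanSpace ℝ (Fin N))} {u : EuclideanSpace ℝ (Fin N) → ℝ}
  {C R s : ℝ} {x : EuclideanSpace ℝ (Fin N)}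

lemma natCast_add_two_mul_mem_Icc (hs : s ∈ Ioo (0 : ℝ) 1) :
    (N : ℝ) + 2 * s ∈ Icc 0 ((N : ℝ) + 2) :=
  ⟨by linarith [hs.1, N.cast_nonneg (α := ℝ)], by linarith [hs.2]⟩

lemma integrableOn_mul_nonlocalNeumann {μ : Measure ℝ} [IsFiniteMeasure μ] {c : ℝ → ℝ} {M : ℝ}
    (hΩfin : volume Ω ≠ ⊤) (hΩR : Ω ⊆ Metric.closedBall 0 R) (hcm : Measurable c)
    (hcpos : ∀ s ∈ Ioo (0 : ℝ) 1, 0 < c s) (hM : ∀ s ∈ Ioo (0 : ℝ) 1, c s ≤ M)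
    (hum : Measurable u) (hC : ∀ y, |u y - ⨍ z in Ω, u z| ≤ C) (hx : R + 1 ≤ ‖x‖) :
    IntegrableOn (fun s => c s * nonlocalNeumann N Ω u s x) (Ioo 0 1) μ := by
  have hmeas := StronglyMeasurable.integral_prod_right' (ν := volume.restrict Ω)
    (f := fun p : ℝ × EuclideanSpace ℝ (Fin N) =>
      (u x - u p.2) / ‖x - p.2‖ ^ ((N : ℝ) + 2 * p.1))
    (by fun_prop : Measurable _).stronglyMeasurable
  refine .of_bound (measure_lt_top _ _) (hcm.aestronglyMeasurable.mul hmeas.aestronglyMeasurable)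
    (M * (2 * C * volume.real Ω)) (ae_restrict_of_forall_mem measurableSet_Ioo fun s hs => ?_)
  rw [norm_mul, Real.norm_of_nonneg (hcpos s hs).le]
  refine mul_le_mul (hM s hs) (norm_setIntegral_le_of_norm_le_const hΩfin.lt_top fun y hy => ?_)
    (norm_nonneg _) ((hcpos s hs).le.trans (hM s hs))
  have hdiff : |u x - u y| ≤ 2 * C := by
    linarith [abs_sub_le (u x) (⨍ z in Ω, u z) (u y), hC x, hC y,
      abs_sub_comm (⨍ z in Ω, u z) (u y)]
  have hkernel : (‖x - y‖ ^ ((N : ℝ) + 2 * s))⁻¹ ≤ 1 := inv_le_one_of_one_le₀ <|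
    Real.one_le_rpow (by linarith [(norm_sub_mem_Icc_of_mem_closedBall x (hΩR hy)).1])
      (natCast_add_two_mul_mem_Icc hs).1
  rw [norm_div, Real.norm_eq_abs, div_eq_mul_inv, Real.norm_of_nonneg (by positivity)]
  simpa using mul_le_mul hdiff hkernel (by positivity) ((abs_nonneg _).trans hdiff)

lemma mul_nonlocalNeumann_pos (hΩm : MeasurableSet Ω) (hΩfin : volume Ω ≠ ⊤)
    (hΩpos : volume Ω ≠ 0) (hR : 0 ≤ R) (hΩR : Ω ⊆ Metric.closedBall 0 R)
    (huL1 : IntegrableOn u Ω) (hC : ∀ y, |u y - ⨍ z in Ω, u z| ≤ C) (hx : R + 1 ≤ ‖x‖)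
    (hs : s ∈ Ioo (0 : ℝ) 1)
    (hfar : C * (((‖x‖ + R) / (‖x‖ - R)) ^ ((N : ℝ) + 2) - 1) < |u x - ⨍ z in Ω, u z|) :
    0 < (u x - ⨍ z in Ω, u z) * nonlocalNeumann N Ω u s x := by
  have : IsFiniteMeasure (volume.restrict Ω) := isFiniteMeasure_restrict.2 hΩfin
  have he := natCast_add_two_mul_mem_Icc (N := N) hs
  have hdist y (hy : y ∈ Ω) := norm_sub_mem_Icc_of_mem_closedBall x (hΩR hy)
  have hpos y (hy : y ∈ Ω) : 0 < ‖x - y‖ ^ ((N : ℝ) + 2 * s) :=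
    Real.rpow_pos_of_pos (by linarith [(hdist y hy).1]) _
  have hk : Integrable (fun y => (‖x - y‖ ^ ((N : ℝ) + 2 * s))⁻¹) (volume.restrict Ω) :=
    .of_bound (Measurable.aestronglyMeasurable (by fun_prop)) 1 <|
      ae_restrict_of_forall_mem hΩm fun y hy => by
        rw [Real.norm_of_nonneg (inv_pos.2 (hpos y hy)).le]
        exact inv_le_one_of_one_le₀ <|
          Real.one_le_rpow (by linarith [(hdist y hy).1]) he.1
  have hk_lo := ae_restrict_of_forall_mem (μ := volume) hΩm fun y hy =>
    inv_anti₀ (hpos y hy) (Real.rpow_le_rpow (norm_nonneg _) (hdist y hy).2 he.1)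
  simpa only [nonlocalNeumann, div_eq_mul_inv] using mul_integral_sub_mul_pos
    (by simpa using hΩpos) huL1 (ae_of_all _ hC) hk hk_lo
    (δ := ((‖x‖ + R) / (‖x‖ - R)) ^ ((N : ℝ) + 2) - 1)
    (ae_restrict_of_forall_mem hΩm fun y hy => by
      rw [add_sub_cancel]
      exact inv_rpow_le_div_rpow_mul_inv_rpow (by linarith) (hdist y hy).1 (hdist y hy).2
        he.1 he.2)
    (inv_pos.2 (Real.rpow_pos_of_pos (by linarith [norm_nonneg x]) _)) hfar

lemma abs_sub_setAverage_le_of_nonlocalNeumann_eq_zero {μ : Measure ℝ} [IsFiniteMeasure μ]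
    {c : ℝ → ℝ} {M : ℝ} (hΩm : MeasurableSet Ω) (hΩfin : volume Ω ≠ ⊤) (hΩpos : volume Ω ≠ 0)
    (hR : 0 ≤ R) (hΩR : Ω ⊆ Metric.closedBall 0 R) (hμ : μ (Ioo 0 1) ≠ 0) (hcm : Measurable c)
    (hcpos : ∀ s ∈ Ioo (0 : ℝ) 1, 0 < c s) (hM : ∀ s ∈ Ioo (0 : ℝ) 1, c s ≤ M)
    (hum : Measurable u) (huL1 : IntegrableOn u Ω) (hC : ∀ y, |u y - ⨍ z in Ω, u z| ≤ C)
    (hx : R + 1 ≤ ‖x‖) (hNeu : ∫ s in Ioo (0 : ℝ) 1, c s * nonlocalNeumann N Ω u s x ∂μ = 0) :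
    |u x - ⨍ y in Ω, u y| ≤ C * (((‖x‖ + R) / (‖x‖ - R)) ^ ((N : ℝ) + 2) - 1) := by
  by_contra! hfar
  have hpos := integral_pos_of_ae_pos_s8 (Measure.restrict_eq_zero.not.2 hμ)
    ((integrableOn_mul_nonlocalNeumann hΩfin hΩR hcm hcpos hM hum hC hx).const_mul _)
    (ae_restrict_of_forall_mem measurableSet_Ioo fun s hs => by
      rw [mul_left_comm]
      exact mul_pos (hcpos s hs)
        (mul_nonlocalNeumann_pos hΩm hΩfin hΩpos hR hΩR huL1 hC hx hs hfar))
  rw [integral_const_mul, hNeu, mul_zero] at hpos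
  exact lt_irrefl 0 hpos

end nonlocalNeumann

/-- A bounded function satisfying the superposed homogeneous Neumann condition outside
`Ω̄` tends to the average of `u` over `Ω` as `|x| → ∞`. -/
theorem statement8 (N : ℕ) (Ω : Set (EuclideanSpace ℝ (Fin N)))
    (hΩo : IsOpen Ω) (hΩb : Bornology.IsBounded Ω) (hΩpos : volume Ω ≠ 0)
    (μ : Measure ℝ) [IsFiniteMeasure μ] (hμ : μ (Set.Ioo (0 : ℝ) 1) ≠ 0)
    (c : ℝ → ℝ) (hcm : Measurable c) (hcpos : ∀ s ∈ Set.Ioo (0 : ℝ) 1, 0 < c s)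
    (M : ℝ) (hM : ∀ s ∈ Set.Ioo (0 : ℝ) 1, c s ≤ M)
    (u : EuclideanSpace ℝ (Fin N) → ℝ) (hum : Measurable u)
    (hub : ∃ K, ∀ x, |u x| ≤ K) (huL1 : IntegrableOn u Ω)
    (hNeu : ∀ x ∉ closure Ω,
      (∫ s in Set.Ioo (0 : ℝ) 1,
        (c s * ∫ y in Ω, (u x - u y) / ‖x - y‖ ^ ((N : ℝ) + 2 * s)) ∂μ) = 0) :
    Filter.Tendsto u (Filter.comap (fun x => ‖x‖) Filter.atTop)
      (nhds ((∫ y in Ω, u y) / (volume Ω).toReal)) := by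
  obtain ⟨K, hK⟩ := hub
  obtain ⟨R, hR, hΩR⟩ := hΩb.subset_closedBall_lt 0 (0 : EuclideanSpace ℝ (Fin N))
  set avg := ⨍ y in Ω, u y
  have havg : (∫ y in Ω, u y) / (volume Ω).toReal = avg := by
    simp only [avg]
    rw [setAverage_eq, smul_eq_mul, measureReal_def, inv_mul_eq_div]
  have hC : ∀ y, |u y - avg| ≤ K + |avg| := fun y => (abs_sub _ _).trans (by linarith [hK y])
  have hfar : ∀ x : EuclideanSpace ℝ (Fin N), R + 1 ≤ ‖x‖ → x ∉ closure Ω := fun x hx hxΩ => by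
    have := mem_closedBall_zero_iff.1 (closure_minimal hΩR Metric.isClosed_closedBall hxΩ)
    linarith
  have hbound : ∀ᶠ x in comap (fun x => ‖x‖) atTop,
      ‖u x - avg‖ ≤ (K + |avg|) * (((‖x‖ + R) / (‖x‖ - R)) ^ ((N : ℝ) + 2) - 1) := by
    filter_upwards [preimage_mem_comap (Ici_mem_atTop (R + 1))] with x hx
    exact abs_sub_setAverage_le_of_nonlocalNeumann_eq_zero hΩo.measurableSet
      hΩb.measure_lt_top.ne hΩpos hR.le hΩR hμ hcm hcpos hM hum huL1 hC hx (hNeu x (hfar x hx))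
  have hδ : Tendsto (fun x : EuclideanSpace ℝ (Fin N) =>
      (K + |avg|) * (((‖x‖ + R) / (‖x‖ - R)) ^ ((N : ℝ) + 2) - 1))
      (comap (fun x => ‖x‖) atTop) (𝓝 0) := by
    have := (tendsto_add_div_sub_rpow_sub_one R ((N : ℝ) + 2)).const_mul (K + |avg|)
    rw [mul_zero] at this
    exact this.comp tendsto_comap
  rw [havg, tendsto_iff_norm_sub_tendsto_zero]
  exact squeeze_zero' (Eventually.of_forall fun _ => norm_nonneg _) hbound hδ
end

section
/- (Poincaré inequality for superposed Gagliardo seminorms.) Let Ω ⊆ ℝᴺ be a bounded Lipschitz domain, and μ a finite nonnegative nontrivial Borel measure on (0,1). Then there exists c = c(Ω, μ) > 0 such that for every u with ∫_{(0,1)} c_{N,s} ∬_{Ω×Ω} |u(x)−u(y)|²/|x−y|^{N+2s} dx dy dμ(s) < ∞, one has ∫_Ω |u(x) − (1/|Ω|)∫_Ω u|² dx ≤ c ∫_{(0,1)} c_{N,s} ∬_{Ω×Ω} |u(x)−u(y)|²/|x−y|^{N+2s} dx dy dμ(s). -/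
open MeasureTheory Set Filter
open scoped ENNReal

/-! On a set of diameter at most `R ≥ 1` every kernel `‖x - y‖ ^ -(N + 2s)` with `s ∈ (0,1)` is
bounded below by `R ^ -(N + 2)`, so each Gagliardo seminorm dominates `R ^ -(N + 2)` times
`∬_{Ω×Ω} |u(x) - u(y)|² = 2 |Ω| ∫_Ω |u - avg_Ω u|²`. Integrating against the weight `c_{N,s} dμ(s)`,
truncated at `1` so that its total mass is finite, gives the inequality with a constant depending
only on `R`, `|Ω|` and the mass of the truncated weight, which is positive because `μ((0,1)) ≠ 0`. -/

section Variance

variable {α : Type*} [MeasurableSpace α] {ν : Measure α} [IsFiniteMeasure ν]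

theorem integral_sub_sq_of_integral_eq_zero {v : α → ℝ} (hv : MemLp v 2 ν)
    (hv0 : ∫ y, v y ∂ν = 0) (x : α) :
    ∫ y, (v x - v y) ^ 2 ∂ν = ν.real univ * v x ^ 2 + ∫ y, v y ^ 2 ∂ν := by
  have hint : Integrable v ν := hv.integrable one_le_two
  have hexp : (fun y => (v x - v y) ^ 2) = fun y => (v x ^ 2 - 2 * v x * v y) + v y ^ 2 := by
    funext y; ring
  have hlin : Integrable (fun y => v x ^ 2 - 2 * v x * v y) ν :=
    (integrable_const _).sub (hint.const_mul _)
  rw [hexp, integral_add hlin hv.integrable_sq,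
    integral_sub (integrable_const _) (hint.const_mul _), integral_const_mul, hv0,
    integral_const, smul_eq_mul]
  ring

theorem lintegral_lintegral_sub_sq {u : α → ℝ} (hu : MemLp u 2 ν) :
    ∫⁻ x, ∫⁻ y, ENNReal.ofReal ((u x - u y) ^ 2) ∂ν ∂ν
      = ENNReal.ofReal (2 * ν.real univ) *
          ∫⁻ x, ENNReal.ofReal ((u x - ⨍ y, u y ∂ν) ^ 2) ∂ν := by
  set v : α → ℝ := fun x => u x - ⨍ y, u y ∂ν
  have hv : MemLp v 2 ν := hu.sub (memLp_const _)
  have hinner : ∀ x, ∫⁻ y, ENNReal.ofReal ((u x - u y) ^ 2) ∂ν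
      = ENNReal.ofReal (ν.real univ * v x ^ 2 + ∫ y, v y ^ 2 ∂ν) := by
    intro x
    have hxy : ∀ y, u x - u y = v x - v y := fun y => (sub_sub_sub_cancel_right _ _ _).symm
    simp_rw [hxy]
    rw [← integral_sub_sq_of_integral_eq_zero hv (integral_sub_average ν u) x]
    exact (ofReal_integral_eq_lintegral_ofReal ((memLp_const _).sub hv).integrable_sq
      (ae_of_all _ fun y => sq_nonneg _)).symm
  have hP : 0 ≤ ∫ y, v y ^ 2 ∂ν := integral_nonneg fun y => sq_nonneg _
  have hquad : Integrable (fun x => ν.real univ * v x ^ 2 + ∫ y, v y ^ 2 ∂ν) ν :=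
    (hv.integrable_sq.const_mul _).add (integrable_const _)
  simp_rw [hinner]
  rw [← ofReal_integral_eq_lintegral_ofReal hquad (ae_of_all _ fun x => by positivity),
    ← ofReal_integral_eq_lintegral_ofReal hv.integrable_sq (ae_of_all _ fun x => sq_nonneg _),
    ← ENNReal.ofReal_mul (by positivity),
    integral_add (hv.integrable_sq.const_mul _) (integrable_const _),
    integral_const_mul, integral_const, smul_eq_mul]
  ring_nf

end Variance

section Kernel

variable {E : Type*} [NormedAddCommGroup E]

theorem sq_sub_div_rpow_le (u : E → ℝ) {x y : E} {R p q : ℝ} (hxy : ‖x - y‖ ≤ R) (hR : 1 ≤ R)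
    (hp : 0 ≤ p) (hpq : p ≤ q) :
    (u x - u y) ^ 2 / R ^ q ≤ |u x - u y| ^ 2 / ‖x - y‖ ^ p := by
  rcases eq_or_ne x y with rfl | hne
  · simp
  rw [sq_abs]
  refine div_le_div_of_nonneg_left (sq_nonneg _)
    (Real.rpow_pos_of_pos (norm_pos_iff.2 (sub_ne_zero.2 hne)) _) ?_
  calc ‖x - y‖ ^ p ≤ R ^ p := Real.rpow_le_rpow (norm_nonneg _) hxy hp
    _ ≤ R ^ q := Real.rpow_le_rpow_of_exponent_le hR hpq

theorem lintegral_lintegral_sq_le_gagliardo [MeasurableSpace E] (ν : Measure E) {Ω : Set E}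
    (hΩ : MeasurableSet Ω) {R p q : ℝ} (hdiam : ∀ x ∈ Ω, ∀ y ∈ Ω, dist x y ≤ R) (hR : 1 ≤ R)
    (hp : 0 ≤ p) (hpq : p ≤ q) (u : E → ℝ) :
    ENNReal.ofReal (R ^ q)⁻¹ * ∫⁻ x in Ω, ∫⁻ y in Ω, ENNReal.ofReal ((u x - u y) ^ 2) ∂ν ∂ν
      ≤ ∫⁻ x in Ω, ∫⁻ y in Ω, ENNReal.ofReal (|u x - u y| ^ 2 / ‖x - y‖ ^ p) ∂ν ∂ν := by
  rw [← lintegral_const_mul' _ _ ENNReal.ofReal_ne_top]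
  refine setLIntegral_mono' hΩ fun x hx => ?_
  rw [← lintegral_const_mul' _ _ ENNReal.ofReal_ne_top]
  refine setLIntegral_mono' hΩ fun y hy => ?_
  rw [← ENNReal.ofReal_mul (inv_nonneg.2 (Real.rpow_nonneg (by linarith) _)), ← div_eq_inv_mul]
  exact ENNReal.ofReal_le_ofReal
    (sq_sub_div_rpow_le u (dist_eq_norm x y ▸ hdiam x hx y hy) hR hp hpq)

end Kernel

section Weight

variable {β : Type*} [MeasurableSpace β] (μ : Measure β) {U : Set β}

theorem setLIntegral_ofReal_min_one_pos (hμU : μ U ≠ 0) {c : β → ℝ}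
    (hc : Measurable c) (hpos : ∀ s ∈ U, 0 < c s) :
    0 < ∫⁻ s in U, ENNReal.ofReal (min (c s) 1) ∂μ := by
  rw [setLIntegral_pos_iff (hc.min measurable_const).ennreal_ofReal]
  have hsupp : U ⊆ Function.support fun s => ENNReal.ofReal (min (c s) 1) :=
    fun s hs => (ENNReal.ofReal_pos.2 (lt_min (hpos s hs) one_pos)).ne'
  rw [inter_eq_right.2 hsupp]
  exact pos_iff_ne_zero.2 hμU

theorem setLIntegral_ofReal_min_one_ne_top [IsFiniteMeasure μ] (c : β → ℝ) :
    ∫⁻ s in U, ENNReal.ofReal (min (c s) 1) ∂μ ≠ ⊤ := by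
  refine ne_top_of_le_ne_top (measure_ne_top (μ.restrict U) univ) ?_
  calc ∫⁻ s in U, ENNReal.ofReal (min (c s) 1) ∂μ ≤ ∫⁻ _ in U, 1 ∂μ :=
        lintegral_mono fun s => ENNReal.ofReal_le_one.2 (min_le_right _ _)
    _ = μ.restrict U univ := lintegral_one

theorem setLIntegral_ofReal_min_one_mul_le (hU : MeasurableSet U) (c : β → ℝ)
    {G : β → ℝ≥0∞} {B : ℝ≥0∞} (hB : ∀ s ∈ U, B ≤ G s) :
    (∫⁻ s in U, ENNReal.ofReal (min (c s) 1) ∂μ) * B ≤ ∫⁻ s in U, ENNReal.ofReal (c s) * G s ∂μ :=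
  (lintegral_mul_const_le _ _).trans <| setLIntegral_mono' hU fun s hs =>
    mul_le_mul' (ENNReal.ofReal_le_ofReal (min_le_left _ _)) (hB s hs)

end Weight

theorem mul_lintegral_sq_sub_setAverage_le_superposed {E β : Type*} [NormedAddCommGroup E]
    [MeasurableSpace E] [MeasurableSpace β] (ν : Measure E) {Ω : Set E} (hΩ : MeasurableSet Ω)
    (hΩν : ν Ω ≠ ⊤) {R q : ℝ} (hdiam : ∀ x ∈ Ω, ∀ y ∈ Ω, dist x y ≤ R) (hR : 1 ≤ R)
    (μ : Measure β) {U : Set β} (hU : MeasurableSet U) (c p : β → ℝ)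
    (hp : ∀ s ∈ U, 0 ≤ p s ∧ p s ≤ q) {u : E → ℝ} (hu : MemLp u 2 (ν.restrict Ω)) :
    (∫⁻ s in U, ENNReal.ofReal (min (c s) 1) ∂μ) * (ENNReal.ofReal (R ^ q)⁻¹ *
        (ENNReal.ofReal (2 * ν.real Ω) * ∫⁻ x in Ω, ENNReal.ofReal ((u x - ⨍ y in Ω, u y ∂ν) ^ 2) ∂ν))
      ≤ ∫⁻ s in U, ENNReal.ofReal (c s) *
          ∫⁻ x in Ω, ∫⁻ y in Ω, ENNReal.ofReal (|u x - u y| ^ 2 / ‖x - y‖ ^ p s) ∂ν ∂ν ∂μ := by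
  have : IsFiniteMeasure (ν.restrict Ω) := isFiniteMeasure_restrict.2 hΩν
  rw [← measureReal_restrict_apply_univ, ← lintegral_lintegral_sub_sq hu]
  exact setLIntegral_ofReal_min_one_mul_le μ hU c fun s hs =>
    lintegral_lintegral_sq_le_gagliardo ν hΩ hdiam hR (hp s hs).1 (hp s hs).2 u

theorem statement9_general (N : ℕ) (Ω : Set (EuclideanSpace ℝ (Fin N)))
    (hΩo : IsOpen Ω) (hΩb : Bornology.IsBounded Ω) (hΩpos : volume Ω ≠ 0)
    (μ : Measure ℝ) [IsFiniteMeasure μ] (hμ : μ (Set.Ioo (0 : ℝ) 1) ≠ 0)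
    (c : ℝ → ℝ) (hcm : Measurable c) (hcpos : ∀ s ∈ Set.Ioo (0 : ℝ) 1, 0 < c s) :
    ∃ C > (0 : ℝ), ∀ u : EuclideanSpace ℝ (Fin N) → ℝ, Measurable u →
      MemLp u 2 (volume.restrict Ω) →
      (∫⁻ s in Set.Ioo (0 : ℝ) 1,
          (ENNReal.ofReal (c s) * ∫⁻ x in Ω, ∫⁻ y in Ω,
            ENNReal.ofReal (|u x - u y| ^ 2 / ‖x - y‖ ^ ((N : ℝ) + 2 * s))) ∂μ) ≠ ⊤ →
      (∫⁻ x in Ω,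
          ENNReal.ofReal ((u x - (∫ y in Ω, u y) / (volume Ω).toReal) ^ 2))
        ≤ ENNReal.ofReal C *
          ∫⁻ s in Set.Ioo (0 : ℝ) 1,
            (ENNReal.ofReal (c s) * ∫⁻ x in Ω, ∫⁻ y in Ω,
              ENNReal.ofReal (|u x - u y| ^ 2 / ‖x - y‖ ^ ((N : ℝ) + 2 * s))) ∂μ := by
  obtain ⟨D, hD⟩ := Metric.isBounded_iff.1 hΩb
  set R : ℝ := max D 1
  have hdiam : ∀ x ∈ Ω, ∀ y ∈ Ω, dist x y ≤ R := fun x hx y hy => (hD hx hy).trans (le_max_left _ _)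
  have hR : 1 ≤ R := le_max_right _ _
  set κ := ∫⁻ s in Ioo (0 : ℝ) 1, ENNReal.ofReal (min (c s) 1) ∂μ
  have hκtop : κ ≠ ⊤ := setLIntegral_ofReal_min_one_ne_top μ c
  have hκ : 0 < κ.toReal :=
    ENNReal.toReal_pos (setLIntegral_ofReal_min_one_pos μ hμ hcm hcpos).ne' hκtop
  have hV : 0 < volume.real Ω := ENNReal.toReal_pos hΩpos hΩb.measure_lt_top.ne
  set q : ℝ := (N : ℝ) + 2
  have hRq : 0 < R ^ q := Real.rpow_pos_of_pos (by linarith) _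
  set K : ℝ := κ.toReal * ((R ^ q)⁻¹ * (2 * volume.real Ω))
  have hK : 0 < K := by positivity
  have hKeq : ENNReal.ofReal K =
      κ * (ENNReal.ofReal (R ^ q)⁻¹ * ENNReal.ofReal (2 * volume.real Ω)) := by
    rw [ENNReal.ofReal_mul hκ.le, ENNReal.ofReal_mul (by positivity), ENNReal.ofReal_toReal hκtop]
  refine ⟨K⁻¹, inv_pos.2 hK, fun u _ hu _ => ?_⟩
  have hlower := mul_lintegral_sq_sub_setAverage_le_superposed volume hΩo.measurableSet
    hΩb.measure_lt_top.ne hdiam hR (q := q) μ (measurableSet_Ioo (a := (0 : ℝ)) (b := 1)) c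
    (fun s => (N : ℝ) + 2 * s) (fun s hs => ⟨by linarith [hs.1, (N.cast_nonneg : (0 : ℝ) ≤ N)],
      show (N : ℝ) + 2 * s ≤ (N : ℝ) + 2 by linarith [hs.2]⟩) hu
  rw [setAverage_eq, smul_eq_mul, inv_mul_eq_div] at hlower
  rw [ENNReal.ofReal_inv_of_pos hK, ← ENNReal.mul_le_iff_le_inv (by positivity) ENNReal.ofReal_ne_top,
    hKeq, mul_assoc, mul_assoc]
  exact hlower

/-- Poincaré inequality for superposed Gagliardo seminorms: on a bounded (Lipschitz)
domain `Ω`, there is `C = C(Ω,μ) > 0` such that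
`∫_Ω |u - avg_Ω u|² ≤ C ∫_{(0,1)} c_{N,s} ∬_{Ω×Ω} |u(x)-u(y)|²/|x-y|^{N+2s} dμ(s)`. -/
theorem statement9 (N : ℕ) (Ω : Set (EuclideanSpace ℝ (Fin N)))
    (hΩo : IsOpen Ω) (hΩb : Bornology.IsBounded Ω) (hΩpos : volume Ω ≠ 0)
    (μ : Measure ℝ) [IsFiniteMeasure μ] (hμ : μ (Set.Ioo (0 : ℝ) 1) ≠ 0)
    (c : ℝ → ℝ) (hcm : Measurable c) (hcpos : ∀ s ∈ Set.Ioo (0 : ℝ) 1, 0 < c s)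
    (hccont : ContinuousOn c (Set.Ioo (0 : ℝ) 1)) :
    ∃ C > (0 : ℝ), ∀ u : EuclideanSpace ℝ (Fin N) → ℝ, Measurable u →
      MemLp u 2 (volume.restrict Ω) →
      (∫⁻ s in Set.Ioo (0 : ℝ) 1,
          (ENNReal.ofReal (c s) * ∫⁻ x in Ω, ∫⁻ y in Ω,
            ENNReal.ofReal (|u x - u y| ^ 2 / ‖x - y‖ ^ ((N : ℝ) + 2 * s))) ∂μ) ≠ ⊤ →
      (∫⁻ x in Ω,
          ENNReal.ofReal ((u x - (∫ y in Ω, u y) / (volume Ω).toReal) ^ 2))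
        ≤ ENNReal.ofReal C *
          ∫⁻ s in Set.Ioo (0 : ℝ) 1,
            (ENNReal.ofReal (c s) * ∫⁻ x in Ω, ∫⁻ y in Ω,
              ENNReal.ofReal (|u x - u y| ^ 2 / ‖x - y‖ ^ ((N : ℝ) + 2 * s))) ∂μ :=
  statement9_general N Ω hΩo hΩb hΩpos μ hμ c hcm hcpos
end

section
/- (Continuous embedding into a fractional Sobolev space.) Let Ω ⊆ ℝᴺ be bounded, open, with Lipschitz boundary, μ a finite nonnegative nontrivial Borel measure on (0,1), and s♯ ∈ (0,1) with μ([s♯,1)) > 0. Define ‖u‖²_μ := ‖u‖²_{L²(Ω)} + (1/2)∫_{(0,1)} c_{N,s}[u]ₛ² dμ(s), with [u]ₛ² the Gagliardo seminorm over 𝒬 = ℝ²ᴺ∖(ℝᴺ∖Ω)². Then there is C > 0 such that ‖u‖_{H^{s♯}(Ω)} ≤ C‖u‖_μ for all u with ‖u‖_μ < ∞. -/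
open MeasureTheory Set
open scoped ENNReal

noncomputable section

/-!
Pick `t < 1` with `μ([s♯, t]) > 0`; on the compact set `K = [s♯, t] ⊂ (0, 1)` the weight `c` is
bounded below by some `m > 0`. For `s ≥ s♯` the kernel `|x - y|^(-N-2s♯)` is dominated by
`|x - y|^(-N-2s)` where `|x - y| ≤ 1` and by `1` elsewhere, and `|u x - u y|² ≤ 2 (u x² + u y²)`,
so `[u]²_{s♯,Ω} ≤ [u]²_{s,𝒬} + 4 |Ω| ‖u‖²_{L²(Ω)}` for every `s ∈ K`. Averaging this over `K`
against `c dμ ≥ m dμ` bounds `[u]²_{s♯,Ω}` by `(m μ(K))⁻¹` times the superposed energy plus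
`4 |Ω| ‖u‖²_{L²(Ω)}`.
-/

theorem div_rpow_le_div_rpow_add_self {w d a b : ℝ} (hw : 0 ≤ w) (hd : 0 ≤ d) (ha : 0 < a)
    (hab : a ≤ b) : w / d ^ a ≤ w / d ^ b + w := by
  rcases hd.eq_or_lt with rfl | hd0
  · simp [Real.zero_rpow ha.ne', Real.zero_rpow (ha.trans_le hab).ne', hw]
  have hwb : 0 ≤ w / d ^ b := div_nonneg hw (Real.rpow_nonneg hd b)
  rcases le_or_gt d 1 with hd1 | hd1
  · have : w / d ^ a ≤ w / d ^ b := div_le_div_of_nonneg_left hw (Real.rpow_pos_of_pos hd0 _)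
      (Real.rpow_le_rpow_of_exponent_ge hd0 hd1 hab)
    linarith
  · linarith [div_le_self hw (Real.one_le_rpow hd1.le ha.le)]

theorem lintegral_lintegral_sq_add_sq {α : Type*} [MeasurableSpace α] {ν : Measure α}
    {u : α → ℝ} (hu : Measurable u) (Ω : Set α) :
    ∫⁻ x in Ω, ∫⁻ y in Ω, 2 * (ENNReal.ofReal (u x ^ 2) + ENNReal.ofReal (u y ^ 2)) ∂ν ∂ν =
      4 * ν Ω * ∫⁻ x in Ω, ENNReal.ofReal (u x ^ 2) ∂ν := by
  have hf : Measurable fun x => ENNReal.ofReal (u x ^ 2) := by fun_prop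
  simp_rw [lintegral_const_mul' 2 _ ENNReal.ofNat_ne_top, lintegral_add_right _ hf,
    setLIntegral_const]
  rw [lintegral_add_left (hf.mul_const _), lintegral_mul_const _ hf, setLIntegral_const]
  ring

section GagliardoKernel

variable {E : Type*} [NormedAddCommGroup E] {u : E → ℝ} {a b : ℝ}

def gagliardoKernel (u : E → ℝ) (a : ℝ) (x y : E) : ℝ≥0∞ :=
  ENNReal.ofReal (|u x - u y| ^ 2 / ‖x - y‖ ^ a)

theorem gagliardoKernel_le (u : E → ℝ) (ha : 0 < a) (hab : a ≤ b) (x y : E) :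
    gagliardoKernel u a x y ≤
      gagliardoKernel u b x y + 2 * (ENNReal.ofReal (u x ^ 2) + ENNReal.ofReal (u y ^ 2)) := by
  have hsq : |u x - u y| ^ 2 ≤ 2 * (u x ^ 2 + u y ^ 2) := by
    rw [sq_abs]; nlinarith [sq_nonneg (u x + u y)]
  calc gagliardoKernel u a x y
      ≤ ENNReal.ofReal (|u x - u y| ^ 2 / ‖x - y‖ ^ b + 2 * (u x ^ 2 + u y ^ 2)) :=
        ENNReal.ofReal_le_ofReal <|
          (div_rpow_le_div_rpow_add_self (sq_nonneg _) (norm_nonneg _) ha hab).trans (by gcongr)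
    _ = _ := by
        rw [ENNReal.ofReal_add (div_nonneg (sq_nonneg _) (Real.rpow_nonneg (norm_nonneg _) _))
            (by positivity), ENNReal.ofReal_mul zero_le_two,
          ENNReal.ofReal_add (sq_nonneg _) (sq_nonneg _), ENNReal.ofReal_ofNat]
        rfl

variable [MeasurableSpace E] [OpensMeasurableSpace E] [MeasurableSub₂ E]
  {ν : Measure E} [SFinite ν]

theorem measurable_gagliardoKernel (hu : Measurable u) (a : ℝ) :
    Measurable fun p : E × E => gagliardoKernel u a p.1 p.2 := by
  unfold gagliardoKernel
  fun_prop

theorem lintegral_gagliardoKernel_le (hu : Measurable u) (Ω : Set E) (ha : 0 < a) (hab : a ≤ b) :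
    ∫⁻ x in Ω, ∫⁻ y in Ω, gagliardoKernel u a x y ∂ν ∂ν ≤
      ∫⁻ p in (Ωᶜ ×ˢ Ωᶜ)ᶜ, gagliardoKernel u b p.1 p.2 ∂ν.prod ν +
        4 * ν Ω * ∫⁻ x in Ω, ENNReal.ofReal (u x ^ 2) ∂ν := by
  have hsub : Ω ×ˢ Ω ⊆ (Ωᶜ ×ˢ Ωᶜ)ᶜ := fun p hp hpc => hpc.1 hp.1
  rw [← setLIntegral_prod _ (measurable_gagliardoKernel hu a).aemeasurable,
    ← lintegral_lintegral_sq_add_sq hu Ω,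
    ← setLIntegral_prod (fun p => 2 * (ENNReal.ofReal (u p.1 ^ 2) + ENNReal.ofReal (u p.2 ^ 2)))
      (by fun_prop)]
  calc ∫⁻ p in Ω ×ˢ Ω, gagliardoKernel u a p.1 p.2 ∂ν.prod ν
      ≤ ∫⁻ p in Ω ×ˢ Ω, (gagliardoKernel u b p.1 p.2 +
          2 * (ENNReal.ofReal (u p.1 ^ 2) + ENNReal.ofReal (u p.2 ^ 2))) ∂ν.prod ν :=
        lintegral_mono fun p => gagliardoKernel_le u ha hab p.1 p.2
    _ = ∫⁻ p in Ω ×ˢ Ω, gagliardoKernel u b p.1 p.2 ∂ν.prod ν +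
          ∫⁻ p in Ω ×ˢ Ω, 2 * (ENNReal.ofReal (u p.1 ^ 2) + ENNReal.ofReal (u p.2 ^ 2)) ∂ν.prod ν :=
        lintegral_add_left (measurable_gagliardoKernel hu b) _
    _ ≤ _ := add_le_add_left (lintegral_mono_set hsub) _

end GagliardoKernel

theorem exists_lt_measure_Icc_ne_zero {μ : Measure ℝ} {a b : ℝ} (h : μ (Ico a b) ≠ 0) :
    ∃ t < b, μ (Icc a t) ≠ 0 := by
  by_contra! hnull
  refine h (measure_mono_null (fun x hx => ?_) (measure_iUnion_null fun n : ℕ =>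
    hnull (b - 1 / (n + 1)) (sub_lt_self b (by positivity))))
  obtain ⟨n, hn⟩ := exists_nat_one_div_lt (sub_pos.mpr hx.2)
  exact mem_iUnion.mpr ⟨n, hx.1, by linarith⟩

theorem le_inv_mul_setLIntegral_mul_add {α : Type*} [MeasurableSpace α] {μ : Measure α}
    {K S : Set α} (hK : MeasurableSet K) (hKS : K ⊆ S) (hK0 : μ K ≠ 0) (hKtop : μ K ≠ ∞)
    {m : ℝ≥0∞} (hm0 : m ≠ 0) (hmtop : m ≠ ∞) {w f : α → ℝ≥0∞} (hw : ∀ s ∈ K, m ≤ w s)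
    {A B : ℝ≥0∞} (h : ∀ s ∈ K, A ≤ f s + B) :
    A ≤ (μ K)⁻¹ * m⁻¹ * ∫⁻ s in S, w s * f s ∂μ + B := by
  have hweight : ∀ s ∈ K, A ≤ m⁻¹ * (w s * f s) + B := fun s hs =>
    (h s hs).trans <| add_le_add_left
      ((ENNReal.inv_mul_cancel_left hm0 hmtop).symm.le.trans (by gcongr; exact hw s hs)) _
  have hint : μ K * A ≤ m⁻¹ * ∫⁻ s in S, w s * f s ∂μ + μ K * B :=
    calc μ K * A = ∫⁻ _ in K, A ∂μ := by rw [setLIntegral_const, mul_comm]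
      _ ≤ ∫⁻ s in K, (m⁻¹ * (w s * f s) + B) ∂μ := setLIntegral_mono' hK hweight
      _ = m⁻¹ * ∫⁻ s in K, w s * f s ∂μ + μ K * B := by
          rw [lintegral_add_right' _ aemeasurable_const, setLIntegral_const,
            lintegral_const_mul' _ _ (ENNReal.inv_ne_top.2 hm0), mul_comm B]
      _ ≤ _ := by gcongr
  calc A = (μ K)⁻¹ * (μ K * A) := (ENNReal.inv_mul_cancel_left hK0 hKtop).symm
    _ ≤ (μ K)⁻¹ * (m⁻¹ * ∫⁻ s in S, w s * f s ∂μ + μ K * B) := by gcongr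
    _ = _ := by rw [mul_add, ENNReal.inv_mul_cancel_left hK0 hKtop, mul_assoc]

theorem ENNReal.add_add_mul_le_mul_add (L E a X : ℝ≥0∞) :
    L + (X * E + a * L) ≤ (1 + a + 2 * X) * (L + 1 / 2 * E) := by
  have h2 : (2 : ℝ≥0∞) * (1 / 2) = 1 := by
    rw [one_div, ENNReal.mul_inv_cancel two_ne_zero ENNReal.ofNat_ne_top]
  calc L + (X * E + a * L) = (1 + a) * L + 2 * (1 / 2) * (X * E) := by rw [h2]; ring
    _ = (1 + a) * L + 2 * X * (1 / 2 * E) := by ring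
    _ ≤ (1 + a + 2 * X) * L + (1 + a + 2 * X) * (1 / 2 * E) := by
        gcongr ?_ * _ + ?_ * _
        exacts [le_self_add, le_add_self]
    _ = _ := (mul_add _ _ _).symm

theorem statement10_general (N : ℕ) (Ω : Set (EuclideanSpace ℝ (Fin N)))
    (hΩb : Bornology.IsBounded Ω)
    (μ : Measure ℝ) [IsFiniteMeasure μ]
    (ssharp : ℝ) (hss : ssharp ∈ Set.Ioo (0 : ℝ) 1)
    (hssμ : μ (Set.Ico ssharp 1) ≠ 0)
    (c : ℝ → ℝ) (hcpos : ∀ s ∈ Set.Ioo (0 : ℝ) 1, 0 < c s)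
    (hccont : ContinuousOn c (Set.Ioo (0 : ℝ) 1)) :
    ∃ C > (0 : ℝ), ∀ u : EuclideanSpace ℝ (Fin N) → ℝ, Measurable u →
      (∫⁻ x in Ω, ENNReal.ofReal ((u x) ^ 2)) +
        (1 / 2) * (∫⁻ s in Set.Ioo (0 : ℝ) 1,
          (ENNReal.ofReal (c s) *
            ∫⁻ p in ((Ωᶜ ×ˢ Ωᶜ)ᶜ : Set (EuclideanSpace ℝ (Fin N) × EuclideanSpace ℝ (Fin N))),
              ENNReal.ofReal (|u p.1 - u p.2| ^ 2 / ‖p.1 - p.2‖ ^ ((N : ℝ) + 2 * s))) ∂μ) ≠ ⊤ →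
      (∫⁻ x in Ω, ENNReal.ofReal ((u x) ^ 2)) +
        (∫⁻ x in Ω, ∫⁻ y in Ω,
          ENNReal.ofReal (|u x - u y| ^ 2 / ‖x - y‖ ^ ((N : ℝ) + 2 * ssharp)))
      ≤ ENNReal.ofReal C *
          ((∫⁻ x in Ω, ENNReal.ofReal ((u x) ^ 2)) +
            (1 / 2) * ∫⁻ s in Set.Ioo (0 : ℝ) 1,
              (ENNReal.ofReal (c s) *
                ∫⁻ p in ((Ωᶜ ×ˢ Ωᶜ)ᶜ : Set (EuclideanSpace ℝ (Fin N) × EuclideanSpace ℝ (Fin N))),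
                  ENNReal.ofReal (|u p.1 - u p.2| ^ 2 / ‖p.1 - p.2‖ ^ ((N : ℝ) + 2 * s))) ∂μ) := by
  obtain ⟨t, ht1, hμK⟩ := exists_lt_measure_Icc_ne_zero hssμ
  have hKsub : Icc ssharp t ⊆ Ioo 0 1 := fun s hs => ⟨hss.1.trans_le hs.1, hs.2.trans_lt ht1⟩
  obtain ⟨m, hm0, hmc⟩ := isCompact_Icc.exists_forall_le' (hccont.mono hKsub)
    fun s hs => hcpos s (hKsub hs)
  have hm : ENNReal.ofReal m ≠ 0 := (ENNReal.ofReal_pos.2 hm0).ne'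
  have hC : 1 + 4 * volume Ω + 2 * ((μ (Icc ssharp t))⁻¹ * (ENNReal.ofReal m)⁻¹) ≠ ∞ := by
    have hΩ : volume Ω ≠ ∞ := hΩb.measure_lt_top.ne
    simp [ENNReal.mul_eq_top, hΩ, hμK, hm]
  refine ⟨_, ENNReal.toReal_pos (by simp) hC, fun u hu _ => ?_⟩
  rw [ENNReal.ofReal_toReal hC]
  refine le_trans (add_le_add_right ?_ _) (ENNReal.add_add_mul_le_mul_add _ _ _ _)
  have hNs : 0 < (N : ℝ) + 2 * ssharp := by have := hss.1; positivity
  exact le_inv_mul_setLIntegral_mul_add measurableSet_Icc hKsub hμK (measure_ne_top _ _) hm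
    ENNReal.ofReal_ne_top (fun s hs => ENNReal.ofReal_le_ofReal (hmc s hs)) fun s hs =>
      lintegral_gagliardoKernel_le (ν := volume) hu Ω hNs
        (by linarith [hs.1] : (N : ℝ) + 2 * ssharp ≤ N + 2 * s)

/-- Continuous embedding of `ℋ_μ(Ω)` into `H^{s♯}(Ω)`: for `s♯` with `μ([s♯,1)) > 0`,
the squared `H^{s♯}(Ω)` norm is bounded by `C` times the squared `‖·‖_μ` norm
(`L²(Ω)` part plus half the superposed Gagliardo energy over `𝒬 = ℝ²ᴺ∖(ℝᴺ∖Ω)²`). -/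
theorem statement10 (N : ℕ) (Ω : Set (EuclideanSpace ℝ (Fin N)))
    (hΩo : IsOpen Ω) (hΩb : Bornology.IsBounded Ω)
    (μ : Measure ℝ) [IsFiniteMeasure μ] (hμ : μ (Set.Ioo (0 : ℝ) 1) ≠ 0)
    (ssharp : ℝ) (hss : ssharp ∈ Set.Ioo (0 : ℝ) 1)
    (hssμ : μ (Set.Ico ssharp 1) ≠ 0)
    (c : ℝ → ℝ) (hcm : Measurable c) (hcpos : ∀ s ∈ Set.Ioo (0 : ℝ) 1, 0 < c s)
    (hccont : ContinuousOn c (Set.Ioo (0 : ℝ) 1)) :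
    ∃ C > (0 : ℝ), ∀ u : EuclideanSpace ℝ (Fin N) → ℝ, Measurable u →
      (∫⁻ x in Ω, ENNReal.ofReal ((u x) ^ 2)) +
        (1 / 2) * (∫⁻ s in Set.Ioo (0 : ℝ) 1,
          (ENNReal.ofReal (c s) *
            ∫⁻ p in ((Ωᶜ ×ˢ Ωᶜ)ᶜ : Set (EuclideanSpace ℝ (Fin N) × EuclideanSpace ℝ (Fin N))),
              ENNReal.ofReal (|u p.1 - u p.2| ^ 2 / ‖p.1 - p.2‖ ^ ((N : ℝ) + 2 * s))) ∂μ) ≠ ⊤ →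
      (∫⁻ x in Ω, ENNReal.ofReal ((u x) ^ 2)) +
        (∫⁻ x in Ω, ∫⁻ y in Ω,
          ENNReal.ofReal (|u x - u y| ^ 2 / ‖x - y‖ ^ ((N : ℝ) + 2 * ssharp)))
      ≤ ENNReal.ofReal C *
          ((∫⁻ x in Ω, ENNReal.ofReal ((u x) ^ 2)) +
            (1 / 2) * ∫⁻ s in Set.Ioo (0 : ℝ) 1,
              (ENNReal.ofReal (c s) *
                ∫⁻ p in ((Ωᶜ ×ˢ Ωᶜ)ᶜ : Set (EuclideanSpace ℝ (Fin N) × EuclideanSpace ℝ (Fin N))),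
                  ENNReal.ofReal (|u p.1 - u p.2| ^ 2 / ‖p.1 - p.2‖ ^ ((N : ℝ) + 2 * s))) ∂μ) :=
  statement10_general N Ω hΩb μ ssharp hss hssμ c hcpos hccont
end
end

section
/- (Continuity across the boundary at exterior points.) Let Ω ⊆ ℝᴺ be bounded and open, μ a finite nonnegative Borel measure on (0,1) with sup_{s∈(0,1)} c_{N,s} < ∞, and u : ℝᴺ → ℝ with u bounded and continuous on Ω̄, satisfying for every x ∈ ℝᴺ∖Ω̄ the identity u(x) = (∫_{(0,1)} c_{N,s} ∫_Ω u(y)/|x−y|^{N+2s} dy dμ(s)) / (∫_{(0,1)} c_{N,s} ∫_Ω 1/|x−y|^{N+2s} dy dμ(s)). Then u is continuous at every point of ℝᴺ∖Ω̄. -/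
open MeasureTheory Set Filter

/-! For `x` in a small ball `B_r(x₀)` around an exterior point, `‖x - y‖ ≥ r` for all `y ∈ Ω`,
so the kernels `‖x - y‖ ^ (-(N + 2s))` are bounded uniformly in `x`, `y` and `s ∈ (0, 1)`.
Dominated convergence, first in `y` and then in `s`, makes numerator and denominator continuous
at `x₀`. The denominator is positive at `x₀` unless `Ω` is null or `μ (0, 1) = 0`; in those
degenerate cases the numerator vanishes identically, so `u = 0` near `x₀`. -/

open Metric Topology

lemma one_div_rpow_le_max {r t p P : ℝ} (hr : 0 < r) (hrt : r ≤ t) (hp : 0 ≤ p) (hpP : p ≤ P) :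
    1 / t ^ p ≤ max (r ^ (-P)) 1 :=
  calc 1 / t ^ p ≤ 1 / r ^ p :=
        one_div_le_one_div_of_le (by positivity) (Real.rpow_le_rpow hr.le hrt hp)
    _ = r ^ (-p) := by rw [Real.rpow_neg hr.le, one_div]
    _ ≤ max (r ^ (-P)) 1 := by
      rcases le_or_gt r 1 with hr1 | hr1
      · exact le_max_of_le_left (Real.rpow_le_rpow_of_exponent_ge hr hr1 (neg_le_neg hpP))
      · exact le_max_of_le_right (Real.rpow_le_one_of_one_le_of_nonpos hr1.le (neg_nonpos.2 hp))

lemma norm_div_rpow_le {a K r t p P : ℝ} (ha : |a| ≤ K) (hr : 0 < r) (hrt : r ≤ t) (hp : 0 ≤ p)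
    (hpP : p ≤ P) : ‖a / t ^ p‖ ≤ K * max (r ^ (-P)) 1 := by
  have ht : 0 < t ^ p := Real.rpow_pos_of_pos (hr.trans_le hrt) p
  rw [Real.norm_eq_abs, abs_div, abs_of_pos ht, div_eq_mul_one_div]
  exact mul_le_mul ha (one_div_rpow_le_max hr hrt hp hpP) (by positivity) ((abs_nonneg a).trans ha)

lemma setIntegral_pos_of_forall_pos {X : Type*} [MeasurableSpace X] {μ : Measure X} {S : Set X}
    {f : X → ℝ} (hS : MeasurableSet S) (hμS : μ S ≠ 0) (hf : IntegrableOn f S μ)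
    (hpos : ∀ x ∈ S, 0 < f x) : 0 < ∫ x in S, f x ∂μ := by
  rw [setIntegral_pos_iff_support_of_nonneg_ae
    (ae_restrict_of_forall_mem hS fun x hx => (hpos x hx).le) hf,
    inter_eq_right.2 fun x hx => Function.mem_support.2 (hpos x hx).ne', pos_iff_ne_zero]
  exact hμS

section Kernel

variable {E : Type*} [NormedAddCommGroup E]

lemma exists_pos_forall_mem_ball_le_norm_sub {s : Set E} {x₀ : E} (h : x₀ ∉ closure s) :
    ∃ r > 0, ∀ x ∈ ball x₀ r, ∀ y ∈ s, r ≤ ‖x - y‖ := by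
  obtain ⟨ε, hε, hball⟩ := Metric.isOpen_iff.1 isClosed_closure.isOpen_compl x₀ h
  refine ⟨ε / 2, half_pos hε, fun x hx y hy => ?_⟩
  have hyε : ε ≤ dist y x₀ := not_lt.1 fun h' => hball h' (subset_closure hy)
  rw [← dist_eq_norm]
  linarith [dist_triangle y x x₀, mem_ball.1 hx, dist_comm x y]

variable [MeasurableSpace E] {ν : Measure E} {Ω : Set E} {g : E → ℝ} {K r : ℝ} {x₀ : E}

lemma norm_setIntegral_div_rpow_le (hν : ν Ω ≠ ⊤) (hgK : ∀ y ∈ Ω, |g y| ≤ K) (hr : 0 < r)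
    (hsep : ∀ x ∈ ball x₀ r, ∀ y ∈ Ω, r ≤ ‖x - y‖) {x : E} (hx : x ∈ ball x₀ r) {p P : ℝ}
    (hp : 0 ≤ p) (hpP : p ≤ P) :
    ‖∫ y in Ω, g y / ‖x - y‖ ^ p ∂ν‖ ≤ K * max (r ^ (-P)) 1 * ν.real Ω :=
  norm_setIntegral_le_of_norm_le_const hν.lt_top fun y hy =>
    norm_div_rpow_le (hgK y hy) hr (hsep x hx y hy) hp hpP

variable {S : Set ℝ} {c p : ℝ → ℝ} {M P : ℝ}

lemma norm_mul_setIntegral_div_rpow_le (hν : ν Ω ≠ ⊤) (hgK : ∀ y ∈ Ω, |g y| ≤ K) (hr : 0 < r)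
    (hsep : ∀ x ∈ ball x₀ r, ∀ y ∈ Ω, r ≤ ‖x - y‖) (hcM : ∀ s ∈ S, ‖c s‖ ≤ M)
    (hp : ∀ s ∈ S, 0 ≤ p s) (hpP : ∀ s ∈ S, p s ≤ P) {x : E} (hx : x ∈ ball x₀ r) {s : ℝ}
    (hs : s ∈ S) :
    ‖c s * ∫ y in Ω, g y / ‖x - y‖ ^ p s ∂ν‖ ≤ M * (K * max (r ^ (-P)) 1 * ν.real Ω) := by
  rw [norm_mul]
  exact mul_le_mul (hcM s hs) (norm_setIntegral_div_rpow_le hν hgK hr hsep hx (hp s hs) (hpP s hs))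
    (norm_nonneg _) ((norm_nonneg _).trans (hcM s hs))

variable [OpensMeasurableSpace E]

lemma measurable_norm_const_sub (x : E) : Measurable fun y : E => ‖x - y‖ :=
  (continuous_const.sub continuous_id).norm.measurable

lemma continuousAt_setIntegral_div_rpow (hν : ν Ω ≠ ⊤) (hΩ : MeasurableSet Ω) (hg : Measurable g)
    (hgK : ∀ y ∈ Ω, |g y| ≤ K) (hr : 0 < r) (hsep : ∀ x ∈ ball x₀ r, ∀ y ∈ Ω, r ≤ ‖x - y‖)
    {q : ℝ} (hq : 0 ≤ q) :
    ContinuousAt (fun x => ∫ y in Ω, g y / ‖x - y‖ ^ q ∂ν) x₀ := by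
  have := isFiniteMeasure_restrict.2 hν
  refine continuousAt_of_dominated (bound := fun _ => K * max (r ^ (-q)) 1)
    (Eventually.of_forall fun x =>
      (hg.div ((measurable_norm_const_sub x).pow_const q)).aestronglyMeasurable) ?_
    (integrable_const _) ?_
  · filter_upwards [ball_mem_nhds x₀ hr] with x hx
    filter_upwards [ae_restrict_mem hΩ] with y hy
    exact norm_div_rpow_le (hgK y hy) hr (hsep x hx y hy) hq le_rfl
  · filter_upwards [ae_restrict_mem hΩ] with y hy
    have hy₀ : 0 < ‖x₀ - y‖ := hr.trans_le (hsep x₀ (mem_ball_self hr) y hy)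
    exact continuousAt_const.div
      ((continuous_id.sub continuous_const).norm.continuousAt.rpow_const (Or.inr hq))
      (Real.rpow_pos_of_pos hy₀ q).ne'

variable [SFinite ν] {μ : Measure ℝ}

lemma stronglyMeasurable_setIntegral_div_rpow (hg : Measurable g) (hpm : Measurable p) (x : E) :
    StronglyMeasurable fun s => ∫ y in Ω, g y / ‖x - y‖ ^ p s ∂ν :=
  StronglyMeasurable.integral_prod_right (f := fun s y => g y / ‖x - y‖ ^ p s)
    ((hg.comp measurable_snd).div (((measurable_norm_const_sub x).comp measurable_snd).pow
      (hpm.comp measurable_fst))).stronglyMeasurable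

lemma continuousAt_setIntegral_mul_setIntegral_div_rpow (hS : MeasurableSet S) (hμ : μ S ≠ ⊤)
    (hν : ν Ω ≠ ⊤) (hΩ : MeasurableSet Ω) (hg : Measurable g) (hgK : ∀ y ∈ Ω, |g y| ≤ K)
    (hr : 0 < r) (hsep : ∀ x ∈ ball x₀ r, ∀ y ∈ Ω, r ≤ ‖x - y‖) (hcm : Measurable c)
    (hcM : ∀ s ∈ S, ‖c s‖ ≤ M) (hpm : Measurable p) (hp : ∀ s ∈ S, 0 ≤ p s)
    (hpP : ∀ s ∈ S, p s ≤ P) :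
    ContinuousAt (fun x => ∫ s in S, c s * ∫ y in Ω, g y / ‖x - y‖ ^ p s ∂ν ∂μ) x₀ := by
  have := isFiniteMeasure_restrict.2 hμ
  refine continuousAt_of_dominated (bound := fun _ => M * (K * max (r ^ (-P)) 1 * ν.real Ω))
    (Eventually.of_forall fun x => hcm.aestronglyMeasurable.mul
      (stronglyMeasurable_setIntegral_div_rpow hg hpm x).aestronglyMeasurable) ?_
    (integrable_const _) ?_
  · filter_upwards [ball_mem_nhds x₀ hr] with x hx
    filter_upwards [ae_restrict_mem hS] with s hs
    exact norm_mul_setIntegral_div_rpow_le hν hgK hr hsep hcM hp hpP hx hs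
  · filter_upwards [ae_restrict_mem hS] with s hs
    exact continuousAt_const.mul
      (continuousAt_setIntegral_div_rpow hν hΩ hg hgK hr hsep (hp s hs))

lemma setIntegral_mul_setIntegral_one_div_rpow_pos (hS : MeasurableSet S) (hμ : μ S ≠ ⊤)
    (hμ₀ : μ S ≠ 0) (hν : ν Ω ≠ ⊤) (hΩ : MeasurableSet Ω) (hν₀ : ν Ω ≠ 0) (hr : 0 < r)
    (hsep : ∀ x ∈ ball x₀ r, ∀ y ∈ Ω, r ≤ ‖x - y‖) (hcm : Measurable c)
    (hcpos : ∀ s ∈ S, 0 < c s) (hcM : ∀ s ∈ S, ‖c s‖ ≤ M) (hpm : Measurable p)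
    (hp : ∀ s ∈ S, 0 ≤ p s) (hpP : ∀ s ∈ S, p s ≤ P) :
    0 < ∫ s in S, c s * ∫ y in Ω, 1 / ‖x₀ - y‖ ^ p s ∂ν ∂μ := by
  have := isFiniteMeasure_restrict.2 hμ
  have := isFiniteMeasure_restrict.2 hν
  have hx₀ := mem_ball_self (x := x₀) hr
  have hinner : ∀ s ∈ S, 0 < ∫ y in Ω, 1 / ‖x₀ - y‖ ^ p s ∂ν := fun s hs =>
    setIntegral_pos_of_forall_pos hΩ hν₀
      (Integrable.mono' (integrable_const _)
        (measurable_const.div ((measurable_norm_const_sub x₀).pow_const _)).aestronglyMeasurable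
        (ae_restrict_of_forall_mem hΩ fun y hy =>
          norm_div_rpow_le abs_one.le hr (hsep x₀ hx₀ y hy) (hp s hs) (hpP s hs)))
      fun y hy => one_div_pos.2 (Real.rpow_pos_of_pos (hr.trans_le (hsep x₀ hx₀ y hy)) _)
  refine setIntegral_pos_of_forall_pos hS hμ₀ ?_ fun s hs => mul_pos (hcpos s hs) (hinner s hs)
  exact Integrable.mono' (integrable_const _)
    (hcm.aestronglyMeasurable.mul (stronglyMeasurable_setIntegral_div_rpow (g := fun _ => 1)
      measurable_const hpm x₀).aestronglyMeasurable)
    (ae_restrict_of_forall_mem hS fun s hs => norm_mul_setIntegral_div_rpow_le (g := fun _ => 1)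
      hν (fun _ _ => abs_one.le) hr hsep hcM hp hpP hx₀ hs)

end Kernel

theorem statement13_general (N : ℕ) (Ω : Set (EuclideanSpace ℝ (Fin N)))
    (hΩo : IsOpen Ω) (hΩb : Bornology.IsBounded Ω)
    (μ : Measure ℝ) [IsFiniteMeasure μ]
    (c : ℝ → ℝ) (hcm : Measurable c) (hcpos : ∀ s ∈ Set.Ioo (0 : ℝ) 1, 0 < c s)
    (M : ℝ) (hM : ∀ s ∈ Set.Ioo (0 : ℝ) 1, c s ≤ M)
    (u : EuclideanSpace ℝ (Fin N) → ℝ) (hum : Measurable u)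
    (hub : ∃ K, ∀ x, |u x| ≤ K)
    (hrep : ∀ x ∉ closure Ω,
      u x = (∫ s in Set.Ioo (0 : ℝ) 1,
              (c s * ∫ y in Ω, u y / ‖x - y‖ ^ ((N : ℝ) + 2 * s)) ∂μ) /
            (∫ s in Set.Ioo (0 : ℝ) 1,
              (c s * ∫ y in Ω, 1 / ‖x - y‖ ^ ((N : ℝ) + 2 * s)) ∂μ)) :
    ∀ x ∉ closure Ω, ContinuousAt u x := by
  intro x₀ hx₀
  obtain ⟨K, hK⟩ := hub
  obtain ⟨r, hr, hsep⟩ := exists_pos_forall_mem_ball_le_norm_sub hx₀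
  have hext : ∀ᶠ x in 𝓝 x₀, x ∉ closure Ω := isClosed_closure.isOpen_compl.mem_nhds hx₀
  by_cases hdeg : volume Ω = 0 ∨ μ (Ioo 0 1) = 0
  · refine (continuousAt_const (y := 0)).congr (hext.mono fun x hx => ?_)
    rw [hrep x hx]
    rcases hdeg with h | h <;> simp [Measure.restrict_eq_zero.2 h]
  obtain ⟨hν₀, hμ₀⟩ := not_or.1 hdeg
  have hν : volume Ω ≠ ⊤ := hΩb.measure_lt_top.ne
  have hcM : ∀ s ∈ Ioo (0 : ℝ) 1, ‖c s‖ ≤ M := fun s hs => by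
    rw [Real.norm_of_nonneg (hcpos s hs).le]; exact hM s hs
  have hp : ∀ s ∈ Ioo (0 : ℝ) 1, 0 ≤ (N : ℝ) + 2 * s := fun s hs => by
    linarith [hs.1, Nat.cast_nonneg (α := ℝ) N]
  have hpP : ∀ s ∈ Ioo (0 : ℝ) 1, (N : ℝ) + 2 * s ≤ N + 2 := fun s hs => by linarith [hs.2]
  have hpm : Measurable fun s : ℝ => (N : ℝ) + 2 * s := by fun_prop
  refine ContinuousAt.congr ?_ (hext.mono fun x hx => (hrep x hx).symm)
  refine ContinuousAt.div ?_ ?_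
    (setIntegral_mul_setIntegral_one_div_rpow_pos measurableSet_Ioo (measure_ne_top _ _) hμ₀
      hν hΩo.measurableSet hν₀ hr hsep hcm hcpos hcM hpm hp hpP).ne'
  · exact continuousAt_setIntegral_mul_setIntegral_div_rpow measurableSet_Ioo (measure_ne_top _ _)
      hν hΩo.measurableSet hum (fun y _ => hK y) hr hsep hcm hcM hpm hp hpP
  · exact continuousAt_setIntegral_mul_setIntegral_div_rpow (g := fun _ => 1) measurableSet_Ioo
      (measure_ne_top _ _) hν hΩo.measurableSet measurable_const (fun _ _ => abs_one.le) hr hsep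
      hcm hcM hpm hp hpP

/-- Exterior continuity: a bounded function, continuous on `Ω̄` and given outside `Ω̄` by
the Neumann mean-value formula, is continuous at every point of `ℝᴺ∖Ω̄`. -/
theorem statement13 (N : ℕ) (Ω : Set (EuclideanSpace ℝ (Fin N)))
    (hΩo : IsOpen Ω) (hΩb : Bornology.IsBounded Ω)
    (μ : Measure ℝ) [IsFiniteMeasure μ]
    (c : ℝ → ℝ) (hcm : Measurable c) (hcpos : ∀ s ∈ Set.Ioo (0 : ℝ) 1, 0 < c s)
    (M : ℝ) (hM : ∀ s ∈ Set.Ioo (0 : ℝ) 1, c s ≤ M)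
    (u : EuclideanSpace ℝ (Fin N) → ℝ) (hum : Measurable u)
    (hub : ∃ K, ∀ x, |u x| ≤ K)
    (huc : ContinuousOn u (closure Ω))
    (hrep : ∀ x ∉ closure Ω,
      u x = (∫ s in Set.Ioo (0 : ℝ) 1,
              (c s * ∫ y in Ω, u y / ‖x - y‖ ^ ((N : ℝ) + 2 * s)) ∂μ) /
            (∫ s in Set.Ioo (0 : ℝ) 1,
              (c s * ∫ y in Ω, 1 / ‖x - y‖ ^ ((N : ℝ) + 2 * s)) ∂μ)) :
    ∀ x ∉ closure Ω, ContinuousAt u x :=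
  statement13_general N Ω hΩo hΩb μ c hcm hcpos M hM u hum hub hrep
end
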